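/- Let G be a finite DAG with edge set E, let L : E → ℕ_{>0}, and let U ⊆ E × E be a symmetric conflict relation. If φ is a proper coloring of the conflict graph (E, U) with colors c_1,...,c_k, and offsets are assigned by z_e = 1 for e with color c_1, and z_e = max_{f : color(f)=c_{i-1}} (z_f + L(f)) for e with color c_i (i > 1), then for every conflicting pair (e,f) ∈ U the intervals [z_e, z_e + L(e) - 1] and [z_f, z_f + L(f) - 1] are disjoint. -/
import Mathlib


theorem coloring_memory_assignment_feasible
    (E : Type*) [Fintype E] [DecidableEq E]
    (L : E → ℕ) (hL : ∀ e, 0 < L e)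
    (U : E → E → Prop) (hUsymm : ∀ e f, U e f → U f e)
    (k : ℕ) (color : E → Fin k)
    (hproper : ∀ e f, U e f → color e ≠ color f)
    (hsurj : Function.Surjective color)
    (z : E → ℕ)
    (hz0 : ∀ e, (color e : ℕ) = 0 → z e = 1)
    (hzs : ∀ e i, (color e : ℕ) = i + 1 →
      z e = Finset.sup (Finset.univ.filter fun f => (color f : ℕ) = i)
        (fun f => z f + L f)) :
    ∀ e f, U e f →
      Disjoint (Set.Icc (z e) (z e + L e - 1)) (Set.Icc (z f) (z f + L f - 1)) := by
  have key : ∀ j : ℕ, ∀ e f : E, (color e : ℕ) < (color f : ℕ) → (color f : ℕ) = j →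
      z e + L e ≤ z f := by
    intro j
    induction j with
    | zero => intro e f h hj; omega
    | succ j ih =>
      intro e f h hj
      have hzf := hzs f j hj
      rcases eq_or_lt_of_le (Nat.lt_succ_iff.mp (hj ▸ h)) with heq | hlt
      · rw [hzf]
        exact Finset.le_sup (f := fun f => z f + L f)
          (by simp only [Finset.mem_filter, Finset.mem_univ, true_and]; exact heq)
      · have hjk : j < k := by have := (color f).isLt; omega
        obtain ⟨g, hg⟩ := hsurj ⟨j, hjk⟩
        have hgj : (color g : ℕ) = j := by rw [hg]
        have h1 : z e + L e ≤ z g := ih e g (by omega) hgj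
        have h2 : z g + L g ≤ z f := by
          rw [hzf]
          exact Finset.le_sup (f := fun f => z f + L f)
            (by simp only [Finset.mem_filter, Finset.mem_univ, true_and]; exact hgj)
        omega
  have main : ∀ e f : E, (color e : ℕ) < (color f : ℕ) →
    Disjoint (Set.Icc (z e) (z e + L e - 1)) (Set.Icc (z f) (z f + L f - 1)) := by
    intro e f h
    have := key _ e f h rfl
    have hLe := hL e
    rw [Set.disjoint_left]
    rintro x ⟨_, hx2⟩ ⟨hx3, _⟩
    omega
  intro e f hU
  have hne := hproper e f hU
  have hne' : (color e : ℕ) ≠ (color f : ℕ) := fun h => hne (Fin.ext h)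
  rcases lt_or_gt_of_ne hne' with h | h
  · exact main e f h
  · exact (main f e h).symm
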